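/- arXiv:0810.4437 — 3 statements merged into one kernel-verified Lean document; each statement's English description precedes it below -/
import Mathlib

section
/- Let U, V, W be real Hilbert spaces and let A : U → V and B : V → W be bounded linear operators such that the range of A equals the kernel of B (exactness at V) and the range of B is closed in W. Then the bounded operator Δ := A ∘ A* + B* ∘ B : V → V is bijective, i.e. it is a continuous linear isomorphism of V. -/
/-!
`⟪Δ v, v⟫ = ‖A† v‖² + ‖B v‖²`. Split `v = v₁ + v₂` along `ker B = range A` and its orthogonal
complement: `B` kills `v₁` and `A†` kills `v₂ ∈ (range A)ᗮ = ker A†`, while, both ranges being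
closed, the open mapping theorem makes `A†` bounded below on `range A` and `B` bounded below on
`(ker B)ᗮ`. Hence `Δ` is coercive, and by Lax–Milgram it is bijective.
-/

open ContinuousLinearMap
open scoped InnerProductSpace

namespace ContinuousLinearMap

section ClosedRange

variable {𝕜 E F : Type*} [NontriviallyNormedField 𝕜]
  [NormedAddCommGroup E] [NormedSpace 𝕜 E] [CompleteSpace E]
  [NormedAddCommGroup F] [NormedSpace 𝕜 F] [CompleteSpace F]

theorem exists_preimage_norm_le_of_isClosed_range (T : E →L[𝕜] F)
    (hT : IsClosed (T.range : Set F)) :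
    ∃ C > 0, ∀ y ∈ T.range, ∃ x, T x = y ∧ ‖x‖ ≤ C * ‖y‖ := by
  have : CompleteSpace T.range := hT.completeSpace_coe
  obtain ⟨C, hC, hpre⟩ := T.rangeRestrict.exists_preimage_norm_le (by
    rintro ⟨y, x, rfl⟩
    exact ⟨x, rfl⟩)
  refine ⟨C, hC, fun y hy => ?_⟩
  obtain ⟨x, hx, hxC⟩ := hpre ⟨y, hy⟩
  exact ⟨x, congrArg Subtype.val hx, hxC⟩

end ClosedRange

section Adjoint

variable {𝕜 E F : Type*} [RCLike 𝕜]
  [NormedAddCommGroup E] [InnerProductSpace 𝕜 E] [CompleteSpace E]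
  [NormedAddCommGroup F] [InnerProductSpace 𝕜 F] [CompleteSpace F]

theorem bounded_below_on_orthogonal_ker (T : E →L[𝕜] F) (hT : IsClosed (T.range : Set F)) :
    ∃ c > 0, ∀ v ∈ T.kerᗮ, c * ‖v‖ ≤ ‖T v‖ := by
  obtain ⟨C, hC, hpre⟩ := T.exists_preimage_norm_le_of_isClosed_range hT
  refine ⟨C⁻¹, inv_pos.2 hC, fun v hv => ?_⟩
  obtain ⟨x, hx, hxC⟩ := hpre (T v) ⟨v, rfl⟩
  have hproj : T.kerᗮ.starProjection x = v :=
    Submodule.eq_starProjection_of_mem_orthogonal hv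
      (T.ker.le_orthogonal_orthogonal (by simp [hx]))
  rw [inv_mul_le_iff₀ hC]
  calc ‖v‖ = ‖T.kerᗮ.starProjection x‖ := by rw [hproj]
    _ ≤ ‖x‖ := T.kerᗮ.norm_starProjection_apply_le x
    _ ≤ C * ‖T v‖ := hxC

theorem adjoint_bounded_below_on_range (T : E →L[𝕜] F) (hT : IsClosed (T.range : Set F)) :
    ∃ c > 0, ∀ v ∈ T.range, c * ‖v‖ ≤ ‖adjoint T v‖ := by
  obtain ⟨C, hC, hpre⟩ := T.exists_preimage_norm_le_of_isClosed_range hT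
  refine ⟨C⁻¹, inv_pos.2 hC, fun v hv => ?_⟩
  obtain ⟨x, rfl, hxC⟩ := hpre v hv
  have key : ‖T x‖ * ‖T x‖ ≤ C * ‖adjoint T (T x)‖ * ‖T x‖ :=
    calc ‖T x‖ * ‖T x‖ = ‖inner 𝕜 x (adjoint T (T x))‖ := by
          rw [adjoint_inner_right, ← inner_self_re_eq_norm, inner_self_eq_norm_mul_norm]
      _ ≤ ‖x‖ * ‖adjoint T (T x)‖ := norm_inner_le_norm _ _
      _ ≤ C * ‖T x‖ * ‖adjoint T (T x)‖ := by gcongr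
      _ = C * ‖adjoint T (T x)‖ * ‖T x‖ := by ring
  rw [inv_mul_le_iff₀ hC]
  rcases (norm_nonneg (T x)).eq_or_lt with h0 | hpos
  · rw [← h0]; positivity
  · exact le_of_mul_le_mul_right key hpos

end Adjoint

section Laplacian

variable {U V W : Type*}
  [NormedAddCommGroup U] [InnerProductSpace ℝ U] [CompleteSpace U]
  [NormedAddCommGroup V] [InnerProductSpace ℝ V] [CompleteSpace V]
  [NormedAddCommGroup W] [InnerProductSpace ℝ W] [CompleteSpace W]

theorem bijective_of_isCoercive_innerSL_comp (T : V →L[ℝ] V)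
    (hT : IsCoercive ((innerSL ℝ).comp T)) : Function.Bijective T := by
  -- the Lax–Milgram operator of the form `⟪T u, w⟫` is `T` itself
  have : InnerProductSpace.continuousLinearMapOfBilin ((innerSL ℝ).comp T) = T :=
    ext fun v => (InnerProductSpace.unique_continuousLinearMapOfBilin _ fun _ => rfl).symm
  rw [← this]
  exact hT.continuousLinearEquivOfBilin.bijective

noncomputable def laplacian (A : U →L[ℝ] V) (B : V →L[ℝ] W) : V →L[ℝ] V :=
  A.comp (adjoint A) + (adjoint B).comp B

theorem inner_laplacian_self (A : U →L[ℝ] V) (B : V →L[ℝ] W) (v : V) :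
    ⟪laplacian A B v, v⟫_ℝ = ‖adjoint A v‖ ^ 2 + ‖B v‖ ^ 2 := by
  rw [laplacian, add_apply, inner_add_left, comp_apply, comp_apply, adjoint_inner_left,
    ← adjoint_inner_right A, real_inner_self_eq_norm_sq, real_inner_self_eq_norm_sq]

theorem isCoercive_laplacian (A : U →L[ℝ] V) (B : V →L[ℝ] W) (hexact : A.range = B.ker)
    (hclosed : IsClosed (B.range : Set W)) : IsCoercive ((innerSL ℝ).comp (laplacian A B)) := by
  obtain ⟨c₁, hc₁, hA⟩ := A.adjoint_bounded_below_on_range (hexact ▸ B.isClosed_ker)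
  obtain ⟨c₂, hc₂, hB⟩ := B.bounded_below_on_orthogonal_ker hclosed
  set c := min c₁ c₂
  have : CompleteSpace B.ker := B.isClosed_ker.completeSpace_coe
  refine ⟨c ^ 2, by positivity, fun v => ?_⟩
  set v₁ := B.ker.starProjection v
  set v₂ := B.kerᗮ.starProjection v
  have hv₁ : v₁ ∈ B.ker := B.ker.starProjection_apply_mem v
  have hv₂ : v₂ ∈ B.kerᗮ := B.kerᗮ.starProjection_apply_mem v
  have hv : v = v₁ + v₂ := (B.ker.starProjection_add_starProjection_orthogonal v).symm
  have hAv₂ : adjoint A v₂ = 0 :=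
    show v₂ ∈ (adjoint A).ker by rw [← orthogonal_range, hexact]; exact hv₂
  have hBv₁ : B v₁ = 0 := hv₁
  have hAv : adjoint A v = adjoint A v₁ := by rw [hv, map_add, hAv₂, add_zero]
  have hBv : B v = B v₂ := by rw [hv, map_add, hBv₁, zero_add]
  have h₁ : (c * ‖v₁‖) ^ 2 ≤ ‖adjoint A v₁‖ ^ 2 := by
    gcongr
    exact (mul_le_mul_of_nonneg_right (min_le_left _ _) (norm_nonneg _)).trans
      (hA v₁ (hexact ▸ hv₁))
  have h₂ : (c * ‖v₂‖) ^ 2 ≤ ‖B v₂‖ ^ 2 := by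
    gcongr
    exact (mul_le_mul_of_nonneg_right (min_le_right _ _) (norm_nonneg _)).trans (hB v₂ hv₂)
  calc c ^ 2 * ‖v‖ * ‖v‖ = (c * ‖v₁‖) ^ 2 + (c * ‖v₂‖) ^ 2 := by
        rw [mul_assoc, ← sq, B.ker.norm_sq_eq_add_norm_sq_starProjection v]; ring
    _ ≤ ‖adjoint A v₁‖ ^ 2 + ‖B v₂‖ ^ 2 := add_le_add h₁ h₂
    _ = ⟪laplacian A B v, v⟫_ℝ := by rw [inner_laplacian_self, hAv, hBv]

end Laplacian

end ContinuousLinearMap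

/-- If `A : U → V` and `B : V → W` are bounded operators between real Hilbert
spaces with `range A = ker B` (exactness at `V`) and `range B` closed in `W`,
then the "Laplacian" `Δ = A ∘ A* + B* ∘ B : V → V` is bijective. -/
theorem laplacian_bijective_of_exact_of_closedRange
    {U V W : Type*}
    [NormedAddCommGroup U] [InnerProductSpace ℝ U] [CompleteSpace U]
    [NormedAddCommGroup V] [InnerProductSpace ℝ V] [CompleteSpace V]
    [NormedAddCommGroup W] [InnerProductSpace ℝ W] [CompleteSpace W]
    (A : U →L[ℝ] V) (B : V →L[ℝ] W)
    (hexact : LinearMap.range (A : U →ₗ[ℝ] V) = LinearMap.ker (B : V →ₗ[ℝ] W))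
    (hclosed : IsClosed (LinearMap.range (B : V →ₗ[ℝ] W) : Set W)) :
    Function.Bijective
      (A.comp (ContinuousLinearMap.adjoint A) +
        (ContinuousLinearMap.adjoint B).comp B) :=
  bijective_of_isCoercive_innerSL_comp (laplacian A B) (isCoercive_laplacian A B hexact hclosed)
end

section
/- Let U, V, W be real Hilbert spaces and let A : U → V and B : V → W be bounded linear operators such that range A = ker B and range B is closed in W. Then there exists ε > 0 such that for all bounded linear operators A' : U → V and B' : V → W with ‖A' − A‖ < ε and ‖B' − B‖ < ε in operator norm, the bounded operator A ∘ (A')* + B* ∘ B' : V → V is bijective. In particular, for such A', B', every c ∈ V satisfying A((A')* c) = 0 and B' c = 0 must be zero. -/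
/-!
Split `c` along `range A ⊕ (range A)ᗮ`. Since `(range A)ᗮ = ker A*` and `range A = ker B`, the
adjoint `A*` only sees the first component and `B` only the second; the open mapping theorem
bounds each component by `A* c`, resp. `B c`, which gives the coercivity estimate
`‖c‖² ≤ K (‖A* c‖² + ‖B c‖²)`. As `⟪(A A'* + B* B') c, c⟫ = ⟪A'* c, A* c⟫ + ⟪B' c, B c⟫`, the
perturbed Laplacian remains coercive when `A'`, `B'` are close to `A`, `B`, and Lax–Milgram
makes it bijective.
-/

open RealInnerProductSpace ContinuousLinearMap

theorem ContinuousLinearMap.exists_preimage_norm_le_of_isClosed_range_s3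
    {𝕜 E F : Type*} [NontriviallyNormedField 𝕜]
    [NormedAddCommGroup E] [NormedSpace 𝕜 E] [CompleteSpace E]
    [NormedAddCommGroup F] [NormedSpace 𝕜 F] [CompleteSpace F]
    (f : E →L[𝕜] F) (hf : IsClosed (LinearMap.range (f : E →ₗ[𝕜] F) : Set F)) :
    ∃ C > 0, ∀ y ∈ LinearMap.range (f : E →ₗ[𝕜] F), ∃ x, f x = y ∧ ‖x‖ ≤ C * ‖y‖ := by
  have : CompleteSpace (LinearMap.range (f : E →ₗ[𝕜] F)) := hf.completeSpace_coe
  obtain ⟨C, hC, hpre⟩ := f.rangeRestrict.exists_preimage_norm_le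
    (LinearMap.range_eq_top.mp (LinearMap.range_rangeRestrict (f : E →ₗ[𝕜] F)))
  refine ⟨C, hC, fun y hy => ?_⟩
  obtain ⟨x, hx, hnorm⟩ := hpre ⟨y, hy⟩
  exact ⟨x, congrArg Subtype.val hx, hnorm⟩

theorem ContinuousLinearMap.bijective_of_isCoercive_innerSL_comp_s3
    {V : Type*} [NormedAddCommGroup V] [InnerProductSpace ℝ V] [CompleteSpace V]
    (L : V →L[ℝ] V) (hL : IsCoercive ((innerSL ℝ).comp L)) : Function.Bijective L := by
  have hsharp : InnerProductSpace.continuousLinearMapOfBilin ((innerSL ℝ).comp L) = L :=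
    ext fun v => (InnerProductSpace.unique_continuousLinearMapOfBilin _ fun _ => rfl).symm
  rw [← hsharp]
  exact hL.continuousLinearEquivOfBilin.bijective

section

variable {U V W : Type*}
  [NormedAddCommGroup U] [InnerProductSpace ℝ U]
  [NormedAddCommGroup V] [InnerProductSpace ℝ V]
  [NormedAddCommGroup W] [InnerProductSpace ℝ W]

theorem ContinuousLinearMap.norm_le_mul_norm_apply_of_mem_orthogonal_ker
    (B : V →L[ℝ] W) {C : ℝ}
    (hB : ∀ y ∈ LinearMap.range (B : V →ₗ[ℝ] W), ∃ x, B x = y ∧ ‖x‖ ≤ C * ‖y‖)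
    {v : V} (hv : v ∈ (LinearMap.ker (B : V →ₗ[ℝ] W))ᗮ) : ‖v‖ ≤ C * ‖B v‖ := by
  rcases eq_or_ne v 0 with rfl | hv0
  · simp
  obtain ⟨x, hx, hxv⟩ := hB (B v) (LinearMap.mem_range_self _ v)
  have hker : v - x ∈ LinearMap.ker (B : V →ₗ[ℝ] W) := by simp [hx]
  have horth : ⟪v - x, v⟫ = 0 := Submodule.inner_right_of_mem_orthogonal hker hv
  refine le_of_mul_le_mul_right ?_ (norm_pos_iff.2 hv0)
  calc ‖v‖ * ‖v‖ = ⟪x, v⟫ := by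
        rw [← real_inner_self_eq_norm_mul_norm, ← sub_eq_zero, ← inner_sub_left, horth]
    _ ≤ ‖x‖ * ‖v‖ := real_inner_le_norm _ _
    _ ≤ C * ‖B v‖ * ‖v‖ := by gcongr

theorem ContinuousLinearMap.sq_norm_apply_sub_le_inner_apply (T T' : U →L[ℝ] V) (x : U) :
    ‖T x‖ ^ 2 - ‖T' - T‖ * ‖T‖ * ‖x‖ ^ 2 ≤ ⟪T' x, T x⟫ := by
  have hsplit : ⟪T' x, T x⟫ = ‖T x‖ ^ 2 + ⟪(T' - T) x, T x⟫ := by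
    rw [sub_apply, inner_sub_left, real_inner_self_eq_norm_sq]; ring
  have hbound : ‖(T' - T) x‖ * ‖T x‖ ≤ ‖T' - T‖ * ‖T‖ * ‖x‖ ^ 2 :=
    calc ‖(T' - T) x‖ * ‖T x‖ ≤ (‖T' - T‖ * ‖x‖) * (‖T‖ * ‖x‖) :=
          mul_le_mul ((T' - T).le_opNorm x) (T.le_opNorm x) (norm_nonneg _) (by positivity)
      _ = ‖T' - T‖ * ‖T‖ * ‖x‖ ^ 2 := by ring
  have := neg_le_of_abs_le (abs_real_inner_le_norm ((T' - T) x) (T x))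
  linarith

variable [CompleteSpace U] [CompleteSpace V] [CompleteSpace W]

theorem ContinuousLinearMap.norm_le_mul_norm_adjoint_apply_of_mem_range
    (A : U →L[ℝ] V) {C : ℝ}
    (hA : ∀ y ∈ LinearMap.range (A : U →ₗ[ℝ] V), ∃ x, A x = y ∧ ‖x‖ ≤ C * ‖y‖)
    {v : V} (hv : v ∈ LinearMap.range (A : U →ₗ[ℝ] V)) : ‖v‖ ≤ C * ‖adjoint A v‖ := by
  rcases eq_or_ne v 0 with rfl | hv0
  · simp
  obtain ⟨u, rfl, hu⟩ := hA v hv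
  refine le_of_mul_le_mul_right ?_ (norm_pos_iff.2 hv0)
  calc ‖A u‖ * ‖A u‖ = ⟪u, adjoint A (A u)⟫ := by
        rw [adjoint_inner_right, real_inner_self_eq_norm_mul_norm]
    _ ≤ ‖u‖ * ‖adjoint A (A u)‖ := real_inner_le_norm _ _
    _ ≤ C * ‖A u‖ * ‖adjoint A (A u)‖ := by gcongr
    _ = C * ‖adjoint A (A u)‖ * ‖A u‖ := by ring

theorem exists_sq_norm_le_of_range_eq_ker (A : U →L[ℝ] V) (B : V →L[ℝ] W)
    (hexact : LinearMap.range (A : U →ₗ[ℝ] V) = LinearMap.ker (B : V →ₗ[ℝ] W))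
    (hclosed : IsClosed (LinearMap.range (B : V →ₗ[ℝ] W) : Set W)) :
    ∃ K > (0 : ℝ), ∀ c : V, ‖c‖ ^ 2 ≤ K * (‖adjoint A c‖ ^ 2 + ‖B c‖ ^ 2) := by
  set S := LinearMap.range (A : U →ₗ[ℝ] V)
  have hS : IsClosed (S : Set V) := hexact ▸ B.isClosed_ker
  have : CompleteSpace S := hS.completeSpace_coe
  obtain ⟨C₁, hC₁, hA⟩ := A.exists_preimage_norm_le_of_isClosed_range_s3 hS
  obtain ⟨C₂, hC₂, hB⟩ := B.exists_preimage_norm_le_of_isClosed_range_s3 hclosed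
  refine ⟨C₁ ^ 2 + C₂ ^ 2, by positivity, fun c => ?_⟩
  set c₁ := S.starProjection c
  set c₂ := Sᗮ.starProjection c
  have hsum : c₁ + c₂ = c := S.starProjection_add_starProjection_orthogonal c
  have hA₂ : adjoint A c₂ = 0 := by
    have : c₂ ∈ Sᗮ := Sᗮ.starProjection_apply_mem c
    rwa [orthogonal_range] at this
  have hB₁ : B c₁ = 0 := by
    have : c₁ ∈ S := S.starProjection_apply_mem c
    rwa [hexact] at this
  have h₁ : ‖c₁‖ ≤ C₁ * ‖adjoint A c‖ := by
    rw [← hsum, map_add, hA₂, add_zero]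
    exact A.norm_le_mul_norm_adjoint_apply_of_mem_range hA (S.starProjection_apply_mem c)
  have h₂ : ‖c₂‖ ≤ C₂ * ‖B c‖ := by
    rw [← hsum, map_add, hB₁, zero_add]
    exact B.norm_le_mul_norm_apply_of_mem_orthogonal_ker hB
      (hexact ▸ Sᗮ.starProjection_apply_mem c)
  calc ‖c‖ ^ 2 = ‖c₁‖ ^ 2 + ‖c₂‖ ^ 2 := S.norm_sq_eq_add_norm_sq_starProjection c
    _ ≤ (C₁ * ‖adjoint A c‖) ^ 2 + (C₂ * ‖B c‖) ^ 2 := by gcongr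
    _ ≤ (C₁ ^ 2 + C₂ ^ 2) * (‖adjoint A c‖ ^ 2 + ‖B c‖ ^ 2) := by
        nlinarith [mul_nonneg (sq_nonneg C₁) (sq_nonneg ‖B c‖),
          mul_nonneg (sq_nonneg C₂) (sq_nonneg ‖adjoint A c‖)]

theorem sq_norm_sub_le_inner_comp_adjoint_add_adjoint_comp_apply
    (A A' : U →L[ℝ] V) (B B' : V →L[ℝ] W) (c : V) :
    ‖adjoint A c‖ ^ 2 + ‖B c‖ ^ 2 - (‖A' - A‖ * ‖A‖ + ‖B' - B‖ * ‖B‖) * ‖c‖ ^ 2 ≤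
      ⟪(A ∘L adjoint A' + adjoint B ∘L B') c, c⟫ := by
  have hA := (adjoint A).sq_norm_apply_sub_le_inner_apply (adjoint A') c
  rw [← map_sub, LinearIsometryEquiv.norm_map, LinearIsometryEquiv.norm_map] at hA
  have hB := B.sq_norm_apply_sub_le_inner_apply B' c
  have hinner : ⟪(A ∘L adjoint A' + adjoint B ∘L B') c, c⟫ =
      ⟪adjoint A' c, adjoint A c⟫ + ⟪B' c, B c⟫ := by
    rw [add_apply, inner_add_left, comp_apply, comp_apply, adjoint_inner_left,
      ← adjoint_inner_right]
  linarith

end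

/-- Perturbation statement: if `range A = ker B` and `range B` is closed, then
for all `A'`, `B'` close enough to `A`, `B` in operator norm, the mixed
Laplacian `A ∘ (A')* + B* ∘ B'` is bijective; in particular any `c` with
`A((A')* c) = 0` and `B' c = 0` vanishes. -/
theorem perturbed_laplacian_bijective
    {U V W : Type*}
    [NormedAddCommGroup U] [InnerProductSpace ℝ U] [CompleteSpace U]
    [NormedAddCommGroup V] [InnerProductSpace ℝ V] [CompleteSpace V]
    [NormedAddCommGroup W] [InnerProductSpace ℝ W] [CompleteSpace W]
    (A : U →L[ℝ] V) (B : V →L[ℝ] W)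
    (hexact : LinearMap.range (A : U →ₗ[ℝ] V) = LinearMap.ker (B : V →ₗ[ℝ] W))
    (hclosed : IsClosed (LinearMap.range (B : V →ₗ[ℝ] W) : Set W)) :
    ∃ ε > (0 : ℝ), ∀ (A' : U →L[ℝ] V) (B' : V →L[ℝ] W),
      ‖A' - A‖ < ε → ‖B' - B‖ < ε →
      Function.Bijective
        (A.comp (ContinuousLinearMap.adjoint A') +
          (ContinuousLinearMap.adjoint B).comp B') ∧
      ∀ c : V, A (ContinuousLinearMap.adjoint A' c) = 0 → B' c = 0 → c = 0 := by
  obtain ⟨K, hK, hcoercive_exact⟩ := exists_sq_norm_le_of_range_eq_ker A B hexact hclosed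
  set ε := (2 * K * (‖A‖ + ‖B‖ + 1))⁻¹
  refine ⟨ε, by positivity, fun A' B' hA' hB' => ?_⟩
  set L := A ∘L adjoint A' + adjoint B ∘L B'
  have hdefect : ‖A' - A‖ * ‖A‖ + ‖B' - B‖ * ‖B‖ ≤ (2 * K)⁻¹ :=
    calc ‖A' - A‖ * ‖A‖ + ‖B' - B‖ * ‖B‖ ≤ ε * ‖A‖ + ε * ‖B‖ := by gcongr
      _ ≤ ε * (‖A‖ + ‖B‖ + 1) := by linarith [(by positivity : 0 ≤ ε)]
      _ = (2 * K)⁻¹ := by simp only [ε]; field_simp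
  have hcoercive : IsCoercive ((innerSL ℝ) ∘L L) := by
    refine ⟨(2 * K)⁻¹, by positivity, fun c => ?_⟩
    change (2 * K)⁻¹ * ‖c‖ * ‖c‖ ≤ ⟪L c, c⟫
    have hlower := sq_norm_sub_le_inner_comp_adjoint_add_adjoint_comp_apply A A' B B' c
    have hKc : K⁻¹ * ‖c‖ ^ 2 ≤ ‖adjoint A c‖ ^ 2 + ‖B c‖ ^ 2 := by
      rw [inv_mul_le_iff₀ hK]; exact hcoercive_exact c
    have hhalf : (2 * K)⁻¹ = K⁻¹ - (2 * K)⁻¹ := by field_simp; ring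
    nlinarith [mul_le_mul_of_nonneg_right hdefect (sq_nonneg ‖c‖)]
  have hL := L.bijective_of_isCoercive_innerSL_comp_s3 hcoercive
  exact ⟨hL, fun c hA hB => hL.injective (by simp [L, hA, hB])⟩
end

section
/- Let T be a finite-dimensional real vector space and let π : T* → T be a linear map from the dual space of T to T which is skew-symmetric, i.e. ξ(π(η)) = −η(π(ξ)) for all ξ, η ∈ T*. Let V ⊆ T be a subspace such that T = V ⊕ π(V⁰), where V⁰ ⊆ T* denotes the annihilator of V and π(V⁰) its image under π, and let W ⊆ T be a subspace with T = V ⊕ W. Then the range of π equals W if and only if π(V⁰) = W and the kernel of π equals the annihilator W⁰ ⊆ T* of W. -/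
theorem IsCompl.eq_of_le_of_isCompl {α : Type*} [Lattice α] [BoundedOrder α] [IsModularLattice α]
    {a b c : α} (hb : IsCompl a b) (hc : IsCompl a c) (hbc : b ≤ c) : b = c :=
  eq_of_le_of_inf_le_of_sup_le hbc
    (by rw [inf_comm c, hc.inf_eq_bot]; exact bot_le)
    (by rw [sup_comm c, hc.sup_eq_top, sup_comm b, hb.sup_eq_top])

/-- A skew-symmetric map `π : M* → M` satisfies `ξ (π η) = 0` for all `η` iff `η (π ξ) = 0`
for all `η`, and over a field the latter forces `π ξ = 0`. -/
theorem LinearMap.ker_eq_dualAnnihilator_range_of_skew {K M : Type*} [Field K]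
    [AddCommGroup M] [Module K M] (π : Module.Dual K M →ₗ[K] M)
    (hskew : ∀ ξ η : Module.Dual K M, ξ (π η) = - η (π ξ)) :
    LinearMap.ker π = (LinearMap.range π).dualAnnihilator := by
  ext ξ
  simp only [LinearMap.mem_ker, Submodule.mem_dualAnnihilator, LinearMap.mem_range,
    forall_exists_index, forall_apply_eq_imp_iff]
  rw [← Module.forall_dual_apply_eq_zero_iff K (π ξ)]
  refine forall_congr' fun η ↦ ?_
  rw [hskew, neg_eq_zero]

/-- Pointwise linear algebra of symplectic leaves: let `π : T* → T` be a
skew-symmetric linear map on a finite-dimensional real vector space, let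
`V ⊆ T` be a subspace with `T = V ⊕ π(V⁰)` and `W ⊆ T` a subspace with
`T = V ⊕ W`. Then `range π = W` iff `π(V⁰) = W` and `ker π = W⁰`. -/
theorem range_eq_iff_graph_leaf
    {T : Type*} [AddCommGroup T] [Module ℝ T] [FiniteDimensional ℝ T]
    (π : Module.Dual ℝ T →ₗ[ℝ] T)
    (hskew : ∀ ξ η : Module.Dual ℝ T, ξ (π η) = - η (π ξ))
    (V W : Submodule ℝ T)
    (hVhor : IsCompl V (Submodule.map π V.dualAnnihilator))
    (hVW : IsCompl V W) :
    LinearMap.range π = W ↔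
      (Submodule.map π V.dualAnnihilator = W ∧
        LinearMap.ker π = W.dualAnnihilator) := by
  have hker := π.ker_eq_dualAnnihilator_range_of_skew hskew
  constructor
  · rintro rfl
    exact ⟨hVhor.eq_of_le_of_isCompl hVW LinearMap.map_le_range, hker⟩
  · rintro ⟨-, hkerW⟩
    exact Subspace.dualAnnihilator_inj.mp (hker.symm.trans hkerW)
end
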